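/- Let p be an odd prime and let ξ₄ ∈ ℚₚ/ℤₚ with |ξ₄|ₚ = p^m, m ≥ 1. The functions χ_{ξ₂,ξ₄}(x) on ℤₚ⁴ defined by χ(x) := p^m·e^{2πi{ξ₂x₂+ξ₄x₄}ₚ}·1_{p^mℤₚ}(x₁)·∫_{ℤₚ} e^{2πi{ξ₄x₃u+ξ₄x₂u²/2}ₚ}du satisfy ∫_{ℤₚ⁴}|χ(x)|²dx = 1. -/

import Mathlib

/-!
Write `G(x₂, x₃) = ∫ e(ξ₄x₃u) φ(u) du` with `φ(u) = e(ξ₄x₂u²/2)`. Expanding `|G|²` as a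
double integral and integrating in `x₃` first, orthogonality of the characters `x ↦ e(cx)`
of `ℤ_[p]` leaves `∫∫ φ(u) φ̄(v) 𝟙[|ξ₄(u - v)| ≤ 1] du dv`. On that set
`φ(u) φ̄(v) = e(ξ₄(u - v) · x₂(u + v)/2) = 1` because `2` is a unit, so the double integral
is the measure `p⁻ᵐ` of the strip `|u - v| ≤ p⁻ᵐ`. The indicator in `x₁` contributes another
`p⁻ᵐ`, which cancels the factor `p²ᵐ`.
-/

open MeasureTheory ComplexConjugate

section AddCharacter

variable {A : Type*} {e : A → ℂ}

lemma conj_eq_neg_of_map_add [AddGroup A] (he_add : ∀ x y, e (x + y) = e x * e y)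
    (he_abs : ∀ x, ‖e x‖ = 1) (he_zero : e 0 = 1) (x : A) : conj (e x) = e (-x) := by
  rw [← Complex.inv_eq_conj (he_abs x)]
  refine (eq_inv_of_mul_eq_one_left ?_).symm
  rw [← he_add, neg_add_cancel, he_zero]

lemma continuous_of_map_add_of_norm_lt_one [SeminormedAddCommGroup A]
    (he_add : ∀ x y, e (x + y) = e x * e y) (he_one : ∀ x, ‖x‖ < 1 → e x = 1) :
    Continuous e := by
  refine continuous_iff_continuousAt.2 fun x => (continuousAt_const (y := e x)).congr ?_
  filter_upwards [Metric.ball_mem_nhds x one_pos] with y hy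
  rw [Metric.mem_ball, dist_eq_norm] at hy
  rw [← add_sub_cancel x y, he_add, he_one _ hy, mul_one]

lemma integral_eq_zero_of_map_add [AddGroup A] [MeasurableSpace A] [MeasurableAdd A]
    (μ : Measure A) [μ.IsAddLeftInvariant] (he_add : ∀ x y, e (x + y) = e x * e y) {a : A}
    (ha : e a ≠ 1) : ∫ x, e x ∂μ = 0 := by
  have h : e a * ∫ x, e x ∂μ = ∫ x, e x ∂μ := by
    rw [← integral_const_mul]
    simp_rw [← he_add]
    exact integral_add_left_eq_self e a
  rw [← sub_eq_zero, ← sub_one_mul, mul_eq_zero, sub_eq_zero] at h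
  exact h.resolve_left ha

end AddCharacter

lemma integral_fun_fst_snd_fst {α β γ E : Type*} [MeasurableSpace α] [MeasurableSpace β]
    [MeasurableSpace γ] [NormedAddCommGroup E] [NormedSpace ℝ E] {μ : Measure α} {ν : Measure β}
    {ρ : Measure γ} [SFinite μ] [SFinite ν] [IsProbabilityMeasure ρ] {f : α × β → E}
    (hf : AEStronglyMeasurable f (μ.prod ν)) :
    ∫ z, f (z.1, z.2.1) ∂μ.prod (ν.prod ρ) = ∫ z, f z ∂μ.prod ν := by
  have h := (MeasurePreserving.id μ).prod (measurePreserving_fst (μ := ν) (ν := ρ))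
  rw [← h.map_eq] at hf ⊢
  exact (integral_map h.measurable.aemeasurable hf).symm

namespace PadicInt

variable {p : ℕ} [Fact p.Prime]

lemma norm_mul_le_one_iff {ξ : ℚ_[p]} {m : ℕ} (hξ : ‖ξ‖ = (p : ℝ) ^ (m : ℤ)) (x : ℤ_[p]) :
    ‖ξ * (x : ℚ_[p])‖ ≤ 1 ↔ ‖x‖ ≤ (p : ℝ) ^ (-(m : ℤ)) := by
  have hp_pos : (0 : ℝ) < (p : ℝ) ^ (m : ℤ) :=
    zpow_pos (by exact_mod_cast (Fact.out : p.Prime).pos) _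
  rw [norm_mul, hξ, ← norm_def, zpow_neg, ← one_div, le_div_iff₀ hp_pos, mul_comm]

/-- The integral over `u` in the definition of `χ`, with `y = x₂` and `x = x₃`. -/
noncomputable def gaussIntegral [MeasurableSpace ℤ_[p]] (μ : Measure ℤ_[p]) (e : ℚ_[p] → ℂ)
    (ξ : ℚ_[p]) (y x : ℤ_[p]) : ℂ :=
  ∫ u : ℤ_[p], e (ξ * x * u + ξ * y * u ^ 2 / 2) ∂μ

variable [MeasurableSpace ℤ_[p]] [BorelSpace ℤ_[p]] {μ : Measure ℤ_[p]} [IsProbabilityMeasure μ]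
  {e : ℚ_[p] → ℂ}

lemma continuous_gaussIntegral (he : Continuous e) (ξ : ℚ_[p]) :
    Continuous fun q : ℤ_[p] × ℤ_[p] => gaussIntegral μ e ξ q.1 q.2 := by
  have h := continuous_parametric_integral_of_continuous (μ := μ)
    (f := fun (q : ℤ_[p] × ℤ_[p]) (u : ℤ_[p]) => e (ξ * q.2 * u + ξ * q.1 * u ^ 2 / 2))
    (by fun_prop) isCompact_univ
  rw [Measure.restrict_univ] at h
  exact h

variable [μ.IsAddLeftInvariant]

variable (μ) in
/-- The ball `p^m ℤ_[p]` is the kernel of `ℤ_[p] → ℤ/p^mℤ`, a subgroup of index `p^m`. -/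
lemma measure_closedBall_pow (x : ℤ_[p]) (m : ℕ) :
    μ (Metric.closedBall x ((p : ℝ) ^ (-(m : ℤ)))) = ((p : ENNReal) ^ m)⁻¹ := by
  set H := (toZModPow (p := p) m).toAddMonoidHom.ker
  have hH : (H : Set ℤ_[p]) = Metric.closedBall 0 ((p : ℝ) ^ (-(m : ℤ))) := by
    ext y
    rw [mem_closedBall_zero_iff, norm_le_pow_iff_mem_span_pow, ← ker_toZModPow]
    rfl
  have hindex : H.index = p ^ m := by
    rw [AddSubgroup.index_ker, AddMonoidHom.range_eq_top.2 (ZMod.ringHom_surjective _)]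
    simp
  have : H.FiniteIndex := ⟨by simp [hindex, (Fact.out : p.Prime).ne_zero]⟩
  have hball := AddSubgroup.index_mul_measure H (hH ▸ measurableSet_closedBall) μ
  rw [hindex, hH, measure_univ] at hball
  have hx : Metric.closedBall x ((p : ℝ) ^ (-(m : ℤ))) =
      (-x + ·) ⁻¹' Metric.closedBall 0 ((p : ℝ) ^ (-(m : ℤ))) := by
    ext y
    simp [dist_eq_norm, neg_add_eq_sub]
  rw [hx, measure_preimage_add]
  exact ENNReal.eq_inv_of_mul_eq_one_left (by rw [mul_comm]; exact_mod_cast hball)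

variable (μ) in
lemma measureReal_closedBall_pow (x : ℤ_[p]) (m : ℕ) :
    μ.real (Metric.closedBall x ((p : ℝ) ^ (-(m : ℤ)))) = (p : ℝ) ^ (-(m : ℤ)) := by
  rw [measureReal_def, measure_closedBall_pow]
  simp

variable (μ) in
lemma measure_prod_norm_sub_le (m : ℕ) :
    (μ.prod μ) {z : ℤ_[p] × ℤ_[p] | ‖z.1 - z.2‖ ≤ (p : ℝ) ^ (-(m : ℤ))} =
      ((p : ENNReal) ^ m)⁻¹ := by
  rw [Measure.prod_apply (measurableSet_le (by fun_prop) measurable_const)]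
  have hslice : ∀ u : ℤ_[p],
      Prod.mk u ⁻¹' {z : ℤ_[p] × ℤ_[p] | ‖z.1 - z.2‖ ≤ (p : ℝ) ^ (-(m : ℤ))} =
        Metric.closedBall u ((p : ℝ) ^ (-(m : ℤ))) := by
    intro u
    ext v
    simp [dist_eq_norm, norm_sub_rev]
  simp_rw [hslice, measure_closedBall_pow, lintegral_const, measure_univ, mul_one]

lemma integral_char_mul (he_add : ∀ x y, e (x + y) = e x * e y)
    (he_ker : ∀ x, e x = 1 ↔ ‖x‖ ≤ 1) (c : ℚ_[p]) :
    ∫ x : ℤ_[p], e (c * x) ∂μ = if ‖c‖ ≤ 1 then 1 else 0 := by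
  split_ifs with hc
  · have h1 : ∀ x : ℤ_[p], e (c * x) = 1 := fun x => (he_ker _).2 <| by
      rw [norm_mul, ← norm_def]
      exact mul_le_one₀ hc (norm_nonneg _) x.norm_le_one
    simp [h1]
  · refine integral_eq_zero_of_map_add μ (e := fun x : ℤ_[p] => e (c * x)) (a := 1) ?_ ?_
    · intro x y
      rw [coe_add, mul_add, he_add]
    · simpa [he_ker] using hc

lemma integral_norm_sq_integral_char_mul (he_add : ∀ x y, e (x + y) = e x * e y)
    (he_abs : ∀ x, ‖e x‖ = 1) (he_ker : ∀ x, e x = 1 ↔ ‖x‖ ≤ 1) (c : ℚ_[p]) {φ : ℤ_[p] → ℂ}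
    (hφ : Continuous φ) :
    ((∫ x : ℤ_[p], ‖∫ u : ℤ_[p], e (c * x * u) * φ u ∂μ‖ ^ 2 ∂μ : ℝ) : ℂ) =
      ∫ z : ℤ_[p] × ℤ_[p],
        if ‖c * ((z.1 - z.2 : ℤ_[p]) : ℚ_[p])‖ ≤ 1 then φ z.1 * conj (φ z.2) else 0 ∂μ.prod μ := by
  have he_zero : e 0 = 1 := (he_ker 0).2 (by simp)
  have hecont : Continuous e :=
    continuous_of_map_add_of_norm_lt_one he_add fun x hx => (he_ker x).2 hx.le
  set F : ℤ_[p] → ℤ_[p] × ℤ_[p] → ℂ :=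
    fun x z => e (c * x * z.1) * φ z.1 * conj (e (c * x * z.2) * φ z.2)
  have hsq : ∀ x : ℤ_[p],
      ((‖∫ u, e (c * x * u) * φ u ∂μ‖ ^ 2 : ℝ) : ℂ) = ∫ z, F x z ∂μ.prod μ := by
    intro x
    rw [Complex.ofReal_pow, ← Complex.mul_conj', ← integral_conj, ← integral_prod_mul]
  have hF : ∀ z, ∫ x, F x z ∂μ =
      if ‖c * ((z.1 - z.2 : ℤ_[p]) : ℚ_[p])‖ ≤ 1 then φ z.1 * conj (φ z.2) else 0 := by
    intro z
    have hFz : ∀ x : ℤ_[p],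
        F x z = e (c * ((z.1 - z.2 : ℤ_[p]) : ℚ_[p]) * x) * (φ z.1 * conj (φ z.2)) := by
      intro x
      simp only [F, map_mul, conj_eq_neg_of_map_add he_add he_abs he_zero]
      rw [mul_mul_mul_comm, ← he_add]
      push_cast
      ring_nf
    simp_rw [hFz]
    rw [integral_mul_const, integral_char_mul he_add he_ker]
    split_ifs <;> simp
  have hint : Integrable (Function.uncurry F) (μ.prod (μ.prod μ)) :=
    (by fun_prop : Continuous (Function.uncurry F)).integrable_of_hasCompactSupport
      (HasCompactSupport.of_compactSpace _)
  calc _ = ∫ x, ∫ z, F x z ∂μ.prod μ ∂μ :=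
        integral_ofReal.symm.trans (integral_congr_ae (.of_forall hsq))
    _ = _ := by
      rw [integral_integral_swap hint]
      exact integral_congr_ae (.of_forall hF)

lemma integral_norm_sq_gaussIntegral (hp : Odd p) (he_add : ∀ x y, e (x + y) = e x * e y)
    (he_abs : ∀ x, ‖e x‖ = 1) (he_ker : ∀ x, e x = 1 ↔ ‖x‖ ≤ 1) {ξ : ℚ_[p]} {m : ℕ}
    (hξ : ‖ξ‖ = (p : ℝ) ^ (m : ℤ)) (y : ℤ_[p]) :
    ∫ x, ‖gaussIntegral μ e ξ y x‖ ^ 2 ∂μ = (p : ℝ) ^ (-(m : ℤ)) := by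
  have hecont : Continuous e :=
    continuous_of_map_add_of_norm_lt_one he_add fun x hx => (he_ker x).2 hx.le
  set φ : ℤ_[p] → ℂ := fun u => e (ξ * y * u ^ 2 / 2)
  have hnear : ∀ u v : ℤ_[p],
      ‖ξ * ((u - v : ℤ_[p]) : ℚ_[p])‖ ≤ 1 ↔ ‖u - v‖ ≤ (p : ℝ) ^ (-(m : ℤ)) :=
    fun u v => norm_mul_le_one_iff hξ (u - v)
  have hphase : ∀ u v : ℤ_[p], ‖ξ * ((u - v : ℤ_[p]) : ℚ_[p])‖ ≤ 1 → φ u * conj (φ v) = 1 := by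
    intro u v huv
    have hnorm_two : ‖(2 : ℚ_[p])‖ = 1 := by
      simpa using Padic.norm_natCast_eq_one_iff.2 hp.coprime_two_right
    rw [conj_eq_neg_of_map_add he_add he_abs ((he_ker 0).2 (by simp)), ← he_add, he_ker]
    have hfactor : ξ * y * u ^ 2 / 2 + -(ξ * y * v ^ 2 / 2) =
        ξ * ((u - v : ℤ_[p]) : ℚ_[p]) * ((y * (u + v) : ℤ_[p]) / 2) := by
      push_cast
      ring
    rw [hfactor, norm_mul, norm_div, hnorm_two, div_one, ← norm_def]
    exact mul_le_one₀ huv (norm_nonneg _) (norm_le_one _)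
  have hind : ∀ z : ℤ_[p] × ℤ_[p],
      (if ‖ξ * ((z.1 - z.2 : ℤ_[p]) : ℚ_[p])‖ ≤ 1 then φ z.1 * conj (φ z.2) else 0) =
        {z : ℤ_[p] × ℤ_[p] | ‖z.1 - z.2‖ ≤ (p : ℝ) ^ (-(m : ℤ))}.indicator (fun _ => 1) z := by
    intro z
    simp only [Set.indicator_apply, Set.mem_ofPred_eq, ← hnear]
    split_ifs with h
    exacts [hphase _ _ h, rfl]
  apply Complex.ofReal_injective
  simp_rw [gaussIntegral, he_add (_ * _ * _)]
  rw [integral_norm_sq_integral_char_mul he_add he_abs he_ker ξ (by fun_prop),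
    integral_congr_ae (.of_forall hind),
    integral_indicator_const _ (measurableSet_le (by fun_prop) measurable_const), measureReal_def,
    measure_prod_norm_sub_le]
  simp

lemma integral_prod_norm_sq_gaussIntegral (hp : Odd p) (he_add : ∀ x y, e (x + y) = e x * e y)
    (he_abs : ∀ x, ‖e x‖ = 1) (he_ker : ∀ x, e x = 1 ↔ ‖x‖ ≤ 1) {ξ : ℚ_[p]} {m : ℕ}
    (hξ : ‖ξ‖ = (p : ℝ) ^ (m : ℤ)) :
    ∫ q : ℤ_[p] × ℤ_[p], ‖gaussIntegral μ e ξ q.1 q.2‖ ^ 2 ∂μ.prod μ = (p : ℝ) ^ (-(m : ℤ)) := by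
  have hcont := continuous_gaussIntegral (μ := μ)
    (continuous_of_map_add_of_norm_lt_one he_add fun x hx => (he_ker x).2 hx.le) ξ
  rw [integral_prod _ ((by fun_prop : Continuous fun q : ℤ_[p] × ℤ_[p] =>
    ‖gaussIntegral μ e ξ q.1 q.2‖ ^ 2).integrable_of_hasCompactSupport
      (HasCompactSupport.of_compactSpace _))]
  simp [integral_norm_sq_gaussIntegral hp he_add he_abs he_ker hξ]

end PadicInt

open PadicInt in
theorem engel_mixed_character_L2_general (p : ℕ) [Fact p.Prime] (hp : Odd p)
    [MeasurableSpace ℤ_[p]] [BorelSpace ℤ_[p]]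
    (μ : Measure ℤ_[p])
    (hμ_inv : ∀ (a : ℤ_[p]) (s : Set ℤ_[p]), μ ((a + ·) ⁻¹' s) = μ s)
    (hμ_norm : μ Set.univ = 1)
    (e : ℚ_[p] → ℂ)
    (he_add : ∀ x y, e (x + y) = e x * e y)
    (he_abs : ∀ x, ‖e x‖ = 1)
    (he_ker : ∀ x, e x = 1 ↔ ‖x‖ ≤ 1)
    (ξ₂ ξ₄ : ℚ_[p]) (m : ℕ) (hξ₄ : ‖ξ₄‖ = (p : ℝ) ^ (m : ℤ)) :
    ∫ x : ℤ_[p] × ℤ_[p] × ℤ_[p] × ℤ_[p],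
        (‖(((p : ℂ) ^ (m : ℕ)) *
          e (ξ₂ * (x.2.1 : ℚ_[p]) + ξ₄ * (x.2.2.2 : ℚ_[p])) *
          (if ‖x.1‖ ≤ (p : ℝ) ^ (-(m : ℤ)) then 1 else 0) *
          ∫ u : ℤ_[p],
            e (ξ₄ * (x.2.2.1 : ℚ_[p]) * (u : ℚ_[p]) +
              ξ₄ * (x.2.1 : ℚ_[p]) * (u : ℚ_[p]) ^ 2 / 2) ∂μ)‖) ^ 2
        ∂(μ.prod (μ.prod (μ.prod μ))) = 1 := by
  have : IsProbabilityMeasure μ := ⟨hμ_norm⟩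
  have : μ.IsAddLeftInvariant := ⟨fun a => Measure.ext fun s hs => by
    rw [Measure.map_apply (measurable_const_add a) hs, hμ_inv]⟩
  set r : ℝ := (p : ℝ) ^ (-(m : ℤ))
  have hfactor : ∀ x : ℤ_[p] × ℤ_[p] × ℤ_[p] × ℤ_[p],
      ‖(p : ℂ) ^ m * e (ξ₂ * x.2.1 + ξ₄ * x.2.2.2) * (if ‖x.1‖ ≤ r then 1 else 0) *
          gaussIntegral μ e ξ₄ x.2.1 x.2.2.1‖ ^ 2 =
        ((p : ℝ) ^ m) ^ 2 * (Metric.closedBall 0 r).indicator 1 x.1 *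
          ‖gaussIntegral μ e ξ₄ x.2.1 x.2.2.1‖ ^ 2 := by
    intro x
    by_cases hx : ‖x.1‖ ≤ r <;> simp [hx, he_abs, mul_pow]
  have hcont := continuous_gaussIntegral (μ := μ)
    (continuous_of_map_add_of_norm_lt_one he_add fun x hx => (he_ker x).2 hx.le) ξ₄
  refine (integral_congr_ae (.of_forall hfactor)).trans ?_
  rw [integral_prod_mul (fun x₁ => ((p : ℝ) ^ m) ^ 2 * (Metric.closedBall 0 r).indicator 1 x₁)
      (fun y : ℤ_[p] × ℤ_[p] × ℤ_[p] => ‖gaussIntegral μ e ξ₄ y.1 y.2.1‖ ^ 2),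
    integral_const_mul, integral_indicator_one measurableSet_closedBall,
    measureReal_closedBall_pow,
    integral_fun_fst_snd_fst (f := fun q => ‖gaussIntegral μ e ξ₄ q.1 q.2‖ ^ 2)
      (by fun_prop : Continuous _).aestronglyMeasurable,
    integral_prod_norm_sq_gaussIntegral hp he_add he_abs he_ker hξ₄]
  have hp0 : (p : ℝ) ≠ 0 := by exact_mod_cast (Fact.out : p.Prime).ne_zero
  simp only [zpow_neg, zpow_natCast]
  field_simp

/-- for an odd prime `p` and `ξ₄ ∈ ℚₚ/ℤₚ` with `|ξ₄|ₚ = p^m`,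
`m ≥ 1`, the character
`χ(x) = p^m·e^{2πi{ξ₂x₂+ξ₄x₄}ₚ}·𝟙_{p^mℤₚ}(x₁)·∫_{ℤₚ} e^{2πi{ξ₄x₃u+ξ₄x₂u²/2}ₚ}du`
on `ℤₚ⁴` satisfies `∫_{ℤₚ⁴} |χ(x)|² dx = 1`. -/
theorem engel_mixed_character_L2 (p : ℕ) [Fact p.Prime] (hp : Odd p)
    [MeasurableSpace ℤ_[p]] [BorelSpace ℤ_[p]]
    (μ : Measure ℤ_[p])
    (hμ_inv : ∀ (a : ℤ_[p]) (s : Set ℤ_[p]), μ ((a + ·) ⁻¹' s) = μ s)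
    (hμ_norm : μ Set.univ = 1)
    (e : ℚ_[p] → ℂ)
    (he_add : ∀ x y, e (x + y) = e x * e y)
    (he_abs : ∀ x, ‖e x‖ = 1)
    (he_ker : ∀ x, e x = 1 ↔ ‖x‖ ≤ 1)
    (ξ₂ ξ₄ : ℚ_[p]) (m : ℕ) (hm : 1 ≤ m) (hξ₄ : ‖ξ₄‖ = (p : ℝ) ^ (m : ℤ)) :
    ∫ x : ℤ_[p] × ℤ_[p] × ℤ_[p] × ℤ_[p],
        (‖(((p : ℂ) ^ (m : ℕ)) *
          e (ξ₂ * (x.2.1 : ℚ_[p]) + ξ₄ * (x.2.2.2 : ℚ_[p])) *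
          (if ‖x.1‖ ≤ (p : ℝ) ^ (-(m : ℤ)) then 1 else 0) *
          ∫ u : ℤ_[p],
            e (ξ₄ * (x.2.2.1 : ℚ_[p]) * (u : ℚ_[p]) +
              ξ₄ * (x.2.1 : ℚ_[p]) * (u : ℚ_[p]) ^ 2 / 2) ∂μ)‖) ^ 2
        ∂(μ.prod (μ.prod (μ.prod μ))) = 1 :=
  engel_mixed_character_L2_general p hp μ hμ_inv hμ_norm e he_add he_abs he_ker ξ₂ ξ₄ m hξ₄
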